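/- Fix q, t ∈ ℝ with |q| < 1 and |t| < 1. Let θ: Λ → ℝ be a (q,t)-Macdonald-positive specialization. Then for every n ≥ 1 one has 0 ≤ θ(g_{n+1}) ≤ ((1−q)(1−tq^n))/((1−t)(1−q^{n+1}))·θ(g_1)·θ(g_n); consequently there is a constant K > 0 (depending only on q, t and θ(g_1)) with θ(g_n) ≤ K^n for all n ≥ 1, so the power series ∑_{n≥0} θ(g_n) z^n has positive radius of convergence. -/

import Mathlib

open scoped BigOperators
open Filter

noncomputable section

/-- A partition: a weakly decreasing, finitely supported function `ℕ → ℕ`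
(rows indexed from `0`; `part i` is the length of row `i+1`). -/
structure Partn where
  toFun : ℕ →₀ ℕ
  antitone' : ∀ ⦃i j : ℕ⦄, i ≤ j → toFun j ≤ toFun i

namespace Partn

/-- The `i`-th part (0-indexed). -/
def part (μ : Partn) (i : ℕ) : ℕ := μ.toFun i

/-- The size `|μ|`. -/
def size (μ : Partn) : ℕ := μ.toFun.sum fun _ v => v

/-- The conjugate partition value `μ'_{j+1} = #{i : μ.part i > j}` (0-indexed column `j`). -/
def conj (μ : Partn) (j : ℕ) : ℕ :=
  (μ.toFun.support.filter fun i => j < μ.toFun i).card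

/-- Containment of Young diagrams. -/
def Sub (μ ν : Partn) : Prop := ∀ i, μ.part i ≤ ν.part i

/-- Cells (boxes) of the Young diagram, 0-indexed: `(i, j)` with `j < μ.part i`. -/
def cells (μ : Partn) : Set (ℕ × ℕ) := {s | s.2 < μ.part s.1}

/-- The empty partition. -/
protected def empty : Partn := ⟨0, fun _ _ _ => le_rfl⟩

/-- The one-column partition `(1^r)`. -/
def col (r : ℕ) : Partn :=
  ⟨Finsupp.onFinset (Finset.range r) (fun i => if i < r then 1 else 0)
      (by intro i h; simp only [Finset.mem_range]; by_contra hc; simp [hc] at h),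
   by
     intro i j hij
     simp only [Finsupp.onFinset_apply]
     split <;> split <;> omega⟩

/-- The partition obtained by prepending a first row of length `N` (at least `λ₁`). -/
def prepend (N : ℕ) (μ : Partn) : Partn :=
  ⟨Finsupp.onFinset (insert 0 (μ.toFun.support.image (· + 1)))
      (fun i => match i with
        | 0 => max N (μ.part 0)
        | k + 1 => μ.part k)
      (by
        intro i h
        match i with
        | 0 => simp
        | k + 1 =>
          simp only [Finset.mem_insert, Finset.mem_image]
          right
          exact ⟨k, Finsupp.mem_support_iff.2 h, rfl⟩),
   by
     intro i j hij
     simp only [Finsupp.onFinset_apply]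
     match i, j with
     | 0, 0 => exact le_rfl
     | 0, k + 1 => exact le_trans (μ.antitone' (Nat.zero_le k)) (le_max_right _ _)
     | a + 1, b + 1 => exact μ.antitone' (by omega)
     | a + 1, 0 => omega⟩

/-- The partition `⌈λ/2⌉` with `⌈λ/2⌉'_j = ⌈λ'_j/2⌉`; its rows are `μ_i = λ_{2i-1}`. -/
def halfUp (μ : Partn) : Partn :=
  ⟨Finsupp.onFinset μ.toFun.support (fun i => μ.part (2 * i))
      (by
        intro i h
        apply Finsupp.mem_support_iff.2
        intro h0
        exact h (Nat.le_zero.mp (h0 ▸ μ.antitone' (by omega : i ≤ 2 * i)))),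
   fun i j hij => μ.antitone' (by omega)⟩

/-- Number of nonzero parts. -/
def length (μ : Partn) : ℕ := μ.toFun.support.card

end Partn

/-- The quantity `b_λ(s)` attached to a box `s` (equal to `1` outside the diagram);
here boxes are 0-indexed. -/
def bbox (q t : ℝ) (μ : Partn) (s : ℕ × ℕ) : ℝ :=
  if s.2 < μ.part s.1 then
    (1 - q ^ (μ.part s.1 - s.2 - 1) * t ^ (μ.conj s.2 - s.1)) /
      (1 - q ^ (μ.part s.1 - s.2) * t ^ (μ.conj s.2 - s.1 - 1))
  else 1

/-- `b_λ := ∏_{s ∈ λ} b_λ(s)`. -/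
def bConst (q t : ℝ) (μ : Partn) : ℝ := ∏ᶠ s ∈ μ.cells, bbox q t μ s

/-- `R_{ν/μ}`: boxes of `ν` in rows containing a box of `ν ∖ μ`. -/
def RSet (ν μ : Partn) : Set (ℕ × ℕ) :=
  {s | s.2 < ν.part s.1 ∧ μ.part s.1 < ν.part s.1}

/-- `C_{ν/μ}`: boxes of `ν` in columns containing a box of `ν ∖ μ`. -/
def CSet (ν μ : Partn) : Set (ℕ × ℕ) :=
  {s | s.2 < ν.part s.1 ∧ μ.conj s.2 < ν.conj s.2}

/-- `μ ≺_h ν` : `ν/μ` is a horizontal strip. -/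
def HStrip (μ ν : Partn) : Prop := Partn.Sub μ ν ∧ ∀ j, ν.conj j ≤ μ.conj j + 1

/-- `μ ≺_v ν` : `ν/μ` is a vertical strip. -/
def VStrip (μ ν : Partn) : Prop := Partn.Sub μ ν ∧ ∀ i, ν.part i ≤ μ.part i + 1

/-- `ψ_{ν/μ} = ∏_{s ∈ R∖C} b_μ(s)/b_ν(s)`. -/
def psiCoeff (q t : ℝ) (ν μ : Partn) : ℝ :=
  ∏ᶠ s ∈ RSet ν μ \ CSet ν μ, bbox q t μ s / bbox q t ν s

/-- `φ'_{ν/μ} = ∏_{s ∈ R} b_μ(s)/b_ν(s)`. -/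
def phiPrimeCoeff (q t : ℝ) (ν μ : Partn) : ℝ :=
  ∏ᶠ s ∈ RSet ν μ, bbox q t μ s / bbox q t ν s

/-- A semistandard tableau of shape `sh`: a chain `∅ = T₀ ≺_h T₁ ≺_h ⋯` with union `sh`. -/
structure Tableau (sh : Partn) where
  seq : ℕ → Partn
  seq_zero : seq 0 = Partn.empty
  strip : ∀ i, HStrip (seq i) (seq (i + 1))
  le_shape : ∀ i, Partn.Sub (seq i) sh
  exhaustive : ∀ i j, j < sh.part i → ∃ n, j < (seq n).part i

/-- The content `c_{i+1} = |T_{i+1}| - |T_i|` of a tableau. -/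
def Tableau.content {sh : Partn} (T : Tableau sh) (i : ℕ) : ℕ :=
  (T.seq (i + 1)).size - (T.seq i).size

/-- `ψ(T) = ∏_{i ≥ 1} ψ_{T_i/T_{i-1}}`. -/
def Tableau.psiWt (q t : ℝ) {sh : Partn} (T : Tableau sh) : ℝ :=
  ∏ᶠ i : ℕ, psiCoeff q t (T.seq (i + 1)) (T.seq i)

/-- `c(ν,μ) = ∑_{T} ψ(T)`, the sum over semistandard tableaux of shape `ν` and content `μ`. -/
def cCoeff (q t : ℝ) (ν μ : Partn) : ℝ :=
  ∑ᶠ T ∈ {T : Tableau ν | ∀ i, T.content i = μ.part i}, Tableau.psiWt q t T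

/-- A standard tableau: content `(1, 1, …, 1, 0, 0, …)`. -/
def IsStandard {sh : Partn} (T : Tableau sh) : Prop :=
  ∀ i, T.content i = if i < sh.size then 1 else 0

/-- The algebra of symmetric functions `Λ = ℝ[g₁, g₂, …]`. -/
abbrev Lam : Type := MvPolynomial ℕ ℝ

/-- The free generators: `gg 0 = 1` and `gg n = g_n` for `n ≥ 1`. -/
def gg (n : ℕ) : Lam := if n = 0 then 1 else MvPolynomial.X (n - 1)

/-- `g_μ = ∏_{i ≥ 1} g_{μ_i}`. -/
def gMono (μ : Partn) : Lam := ∏ᶠ i : ℕ, gg (μ.part i)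

/-- `Q` satisfies the defining relations `g_μ = ∑_ν c(ν,μ) Q_ν` of the Macdonald functions. -/
def QRel (q t : ℝ) (Q : Partn → Lam) : Prop :=
  ∀ μ : Partn, gMono μ = ∑ᶠ ν : Partn, cCoeff q t ν μ • Q ν

/-- The elementary symmetric functions `e_r := Q_{(1^r)}/b_{(1^r)}`, `e_0 := 1`. -/
def eQ (q t : ℝ) (Q : Partn → Lam) (r : ℕ) : Lam :=
  if r = 0 then 1 else (bConst q t (Partn.col r))⁻¹ • Q (Partn.col r)

/-- The defining recurrence for the Macdonald power sums, equivalent to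
`∑ g_n z^n = exp(∑ (1/n)((1-tⁿ)/(1-qⁿ)) p_n zⁿ)`. -/
def PRel (q t : ℝ) (p : ℕ → Lam) : Prop :=
  ∀ n : ℕ, 1 ≤ n → (n : ℝ) • gg n =
    ∑ k ∈ Finset.Icc 1 n, ((1 - t ^ k) / (1 - q ^ k)) • (p k * gg (n - k))

/-- The defining recurrence for the power sums in terms of the complete homogeneous
generators, equivalent to `∑ h_n z^n = exp(∑ p_n zⁿ/n)`. -/
def PRelSchur (p : ℕ → Lam) : Prop :=
  ∀ n : ℕ, 1 ≤ n → (n : ℝ) • gg n = ∑ k ∈ Finset.Icc 1 n, p k * gg (n - k)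

/-- `h_k` for an integer index: `0` for `k < 0`, `1` for `k = 0`. -/
def hInt (k : ℤ) : Lam := if k < 0 then 0 else if k = 0 then 1 else MvPolynomial.X (k.toNat - 1)

/-- The Schur function via the Jacobi–Trudi determinant. -/
def schur (μ : Partn) : Lam :=
  Matrix.det (Matrix.of fun i j : Fin μ.length => hInt ((μ.part i : ℤ) - (i : ℤ) + (j : ℤ)))

/-- `lim_{r→∞} τ(f_r)^{1/r} = 0`. -/
def RootDecay (τ : Lam →ₐ[ℝ] ℝ) (f : ℕ → Lam) : Prop :=
  Filter.Tendsto (fun r : ℕ => Real.rpow (τ (f r)) (1 / (r : ℝ))) Filter.atTop (nhds 0)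

/-- Complete homogeneous value `h_s(α) = ∑_{i₁ ≤ ⋯ ≤ i_s} α_{i₁}⋯α_{i_s}`. -/
def hSym (α : ℕ → ℝ) (s : ℕ) : ℝ :=
  ∑' f : {f : Fin s → ℕ // Monotone f}, ∏ k, α (f.1 k)

/-- Elementary value `e_r(β) = ∑_{j₁ < ⋯ < j_r} β_{j₁}⋯β_{j_r}`. -/
def eSym (β : ℕ → ℝ) (r : ℕ) : ℝ :=
  ∑' f : {f : Fin r → ℕ // StrictMono f}, ∏ k, β (f.1 k)

/-- Entries of the Toeplitz matrix: `a₀ = 1`, `a_m = 0` for `m < 0`. -/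
def toepEntry (a : ℕ → ℝ) (k : ℤ) : ℝ := if k < 0 then 0 else if k = 0 then 1 else a k.toNat

/-- Total positivity of the Toeplitz matrix `(a_{j-i})`. -/
def IsPolyaFrequencySeq (a : ℕ → ℝ) : Prop :=
  ∀ (n : ℕ) (i j : Fin n → ℕ), StrictMono i → StrictMono j →
    0 ≤ (Matrix.of fun k l : Fin n => toepEntry a ((j l : ℤ) - (i k : ℤ))).det

/-- The `q`-Pochhammer symbol `(x; q)_m`. -/
def qPoch (x q : ℝ) (m : ℕ) : ℝ := ∏ i ∈ Finset.range m, (1 - x * q ^ i)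

/-- The `n`-th coefficient of the formal power series `(xz; q)_∞ = ∏_{m ≥ 0} (1 - x q^m z)`. -/
def qInfCoeff (x q : ℝ) (n : ℕ) : ℝ :=
  (-1 : ℝ) ^ n * x ^ n * ∑' f : {f : Fin n → ℕ // StrictMono f}, ∏ k, q ^ (f.1 k)

/-- `G_s(α) = ∑_{(k_i) : ∑ k_i = s} ∏_i ((t;q)_{k_i}/(q;q)_{k_i}) α_i^{k_i}`. -/
def GFun (q t : ℝ) (α : ℕ → ℝ) (s : ℕ) : ℝ :=
  ∑' k : {k : ℕ →₀ ℕ // k.sum (fun _ m => m) = s},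
    ∏ᶠ i : ℕ, (qPoch t q (k.1 i) / qPoch q q (k.1 i)) * α i ^ (k.1 i)

/-- Taxicab distance between boxes. -/
def dist2 (s1 s2 : ℕ × ℕ) : ℕ :=
  ((s1.1 : ℤ) - (s2.1 : ℤ)).natAbs + ((s1.2 : ℤ) - (s2.2 : ℤ)).natAbs

/-- `μ ≺_{≤d} ν`: `μ ⊆ ν` and `ν∖μ` has two distinct boxes at distance `≤ d`. -/
def NearPair (d : ℕ) (μ ν : Partn) : Prop :=
  Partn.Sub μ ν ∧ ∃ s1 s2 : ℕ × ℕ, s1 ≠ s2 ∧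
    (s1 ∈ ν.cells ∧ s1 ∉ μ.cells) ∧ (s2 ∈ ν.cells ∧ s2 ∉ μ.cells) ∧ dist2 s1 s2 ≤ d

/-- Weakly increasing along rows and down columns (for fillings of `μ`). -/
def RowColWeak (μ : Partn) (F : ℕ × ℕ → ℕ) : Prop :=
  (∀ i j : ℕ, (i, j + 1) ∈ μ.cells → F (i, j) ≤ F (i, j + 1)) ∧
  (∀ i j : ℕ, (i + 1, j) ∈ μ.cells → F (i, j) ≤ F (i + 1, j))

/-- Strictly increasing along rows and down columns (for fillings of `μ`). -/
def RowColStrict (μ : Partn) (F : ℕ × ℕ → ℕ) : Prop :=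
  (∀ i j : ℕ, (i, j + 1) ∈ μ.cells → F (i, j) < F (i, j + 1)) ∧
  (∀ i j : ℕ, (i + 1, j) ∈ μ.cells → F (i, j) < F (i + 1, j))

/-- `SD_d(λ)` (for `|λ| = 2n`): fillings with `1,…,n`, weakly increasing along rows and
columns, each value appearing in exactly two boxes, at distance `≤ d` from each other. -/
def SDset (d : ℕ) (μ : Partn) : Set (ℕ × ℕ → ℕ) :=
  {F | (∀ s, s ∉ μ.cells → F s = 0) ∧ RowColWeak μ F ∧
       (∀ m : ℕ, 1 ≤ m → m ≤ μ.size / 2 → ({s ∈ μ.cells | F s = m}).ncard = 2) ∧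
       (∀ s ∈ μ.cells, 1 ≤ F s ∧ F s ≤ μ.size / 2) ∧
       (∀ s1 ∈ μ.cells, ∀ s2 ∈ μ.cells, F s1 = F s2 → dist2 s1 s2 ≤ d)}

/-- `ST(μ)` as fillings: standard tableaux of shape `μ`. -/
def STset (μ : Partn) : Set (ℕ × ℕ → ℕ) :=
  {F | (∀ s, s ∉ μ.cells → F s = 0) ∧ RowColStrict μ F ∧
       (∀ m : ℕ, 1 ≤ m → m ≤ μ.size → ({s ∈ μ.cells | F s = m}).ncard = 1) ∧
       (∀ s ∈ μ.cells, 1 ≤ F s ∧ F s ≤ μ.size)}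

/-- The set of normalized non-negative harmonic functions on the `(q,t)` Young graph. -/
def Hset (q t : ℝ) : Set (Partn → ℝ) :=
  {f | (∀ μ, 0 ≤ f μ) ∧ f Partn.empty = 1 ∧
       ∀ μ : Partn, f μ =
         ∑ᶠ ν ∈ {ν : Partn | Partn.Sub μ ν ∧ ν.size = μ.size + 1},
           psiCoeff q t ν μ * f ν}

end
noncomputable section Aux

open Function

/-! ### Generic finprod/finsum helpers -/

lemma finprod_pos' {α : Type*} {f : α → ℝ} (h : ∀ x, 0 < f x) : 0 < ∏ᶠ x, f x := by
  by_cases hf : (Function.mulSupport f).Finite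
  · rw [finprod_eq_prod f hf]; exact Finset.prod_pos fun i _ => h i
  · rw [finprod_of_infinite_mulSupport hf]
    exact one_pos

lemma finprod_mem_pos {α : Type*} {s : Set α} {f : α → ℝ} (h : ∀ x, 0 < f x) :
    0 < ∏ᶠ x ∈ s, f x := by
  rw [finprod_mem_def]
  refine finprod_pos' fun x => ?_
  by_cases hx : x ∈ s
  · rw [Set.mulIndicator_of_mem hx]; exact h x
  · rw [Set.mulIndicator_of_notMem hx]; exact one_pos

lemma finsum_mem_nonneg {α : Type*} {s : Set α} {f : α → ℝ} (h : ∀ x, 0 ≤ f x) :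
    0 ≤ ∑ᶠ x ∈ s, f x := by
  rw [finsum_mem_def]
  refine finsum_nonneg fun x => ?_
  by_cases hx : x ∈ s
  · rw [Set.indicator_of_mem hx]; exact h x
  · rw [Set.indicator_of_notMem hx]

/-! ### Basic partition lemmas -/

lemma Partn.ext' {μ ν : Partn} (h : ∀ i, μ.part i = ν.part i) : μ = ν := by
  cases μ with
  | mk f hf =>
    cases ν with
    | mk g hg =>
      simp only [Partn.mk.injEq]
      exact Finsupp.ext h

lemma Partn.empty_part (i : ℕ) : Partn.empty.part i = 0 := rfl

lemma Partn.empty_conj (j : ℕ) : Partn.empty.conj j = 0 := by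
  simp [Partn.conj, Partn.empty]

lemma Partn.empty_size : Partn.empty.size = 0 := by
  simp [Partn.size, Partn.empty]

lemma Partn.empty_sub (μ : Partn) : Partn.Sub Partn.empty μ := fun i => Nat.zero_le _

lemma Partn.conj_gt {μ : Partn} {i j : ℕ} (h : j < μ.part i) : i < μ.conj j := by
  have hsub : Finset.range (i + 1) ⊆ μ.toFun.support.filter fun k => j < μ.toFun k := by
    intro k hk
    rw [Finset.mem_range] at hk
    have hle : μ.part i ≤ μ.part k := μ.antitone' (by omega)
    have hjk : j < μ.toFun k := lt_of_lt_of_le h hle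
    exact Finset.mem_filter.mpr ⟨Finsupp.mem_support_iff.mpr (by omega), hjk⟩
  have hcard := Finset.card_le_card hsub
  rw [Finset.card_range] at hcard
  exact lt_of_lt_of_le (Nat.lt_succ_self i) hcard

lemma Partn.size_eq_sum (μ : Partn) {s : Finset ℕ} (hs : μ.toFun.support ⊆ s) :
    μ.size = ∑ i ∈ s, μ.part i :=
  Finsupp.sum_of_support_subset _ hs _ (fun _ _ => rfl)

lemma Partn.size_mono {μ ν : Partn} (h : Partn.Sub μ ν) : μ.size ≤ ν.size := by
  rw [μ.size_eq_sum (Finset.subset_union_left (s₂ := ν.toFun.support)),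
    ν.size_eq_sum (Finset.subset_union_right (s₁ := μ.toFun.support))]
  exact Finset.sum_le_sum fun i _ => h i

lemma Partn.eq_of_sub_size {μ ν : Partn} (h : Partn.Sub μ ν) (hs : μ.size = ν.size) : μ = ν := by
  classical
  set s := μ.toFun.support ∪ ν.toFun.support with hsdef
  have h1 : μ.size = ∑ i ∈ s, μ.part i := μ.size_eq_sum Finset.subset_union_left
  have h2 : ν.size = ∑ i ∈ s, ν.part i := ν.size_eq_sum Finset.subset_union_right
  have hsum : ∑ i ∈ s, μ.part i = ∑ i ∈ s, ν.part i := by rw [← h1, ← h2, hs]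
  have := (Finset.sum_eq_sum_iff_of_le (fun i _ => h i)).mp hsum
  refine Partn.ext' fun i => ?_
  by_cases hi : i ∈ s
  · exact this i hi
  · have h1 : μ.toFun i = 0 := by
      by_contra hc
      exact hi (Finset.mem_union_left _ (Finsupp.mem_support_iff.mpr hc))
    have h2 : ν.toFun i = 0 := by
      by_contra hc
      exact hi (Finset.mem_union_right _ (Finsupp.mem_support_iff.mpr hc))
    simp [Partn.part, h1, h2]


/-! ### Row and hook partitions -/

def rowP (m : ℕ) : Partn :=
  ⟨Finsupp.single 0 m, by
    intro i j hij
    rw [Finsupp.single_apply, Finsupp.single_apply]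
    split_ifs <;> omega⟩

lemma rowP_part (m i : ℕ) : (rowP m).part i = if i = 0 then m else 0 := by
  simp [rowP, Partn.part, Finsupp.single_apply, eq_comm]

lemma rowP_part_zero (m : ℕ) : (rowP m).part 0 = m := by simp [rowP_part]

lemma rowP_conj (m j : ℕ) : (rowP m).conj j = if j < m then 1 else 0 := by
  rcases Nat.eq_zero_or_pos m with rfl | hm
  · simp [Partn.conj, rowP]
  · have hsupp : (rowP m).toFun.support = {0} :=
      Finsupp.support_single_ne_zero _ (by omega)
    rw [Partn.conj, hsupp]
    by_cases hj : j < m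
    · rw [Finset.filter_true_of_mem, Finset.card_singleton, if_pos hj]
      intro i hi
      rw [Finset.mem_singleton] at hi
      subst hi
      simpa [rowP, Finsupp.single_apply] using hj
    · rw [Finset.filter_false_of_mem, Finset.card_empty, if_neg hj]
      intro i hi
      rw [Finset.mem_singleton] at hi
      subst hi
      simpa [rowP, Finsupp.single_apply] using hj

lemma rowP_size (m : ℕ) : (rowP m).size = m := by
  simp [Partn.size, rowP, Finsupp.sum_single_index]

lemma rowP_sub {m m' : ℕ} (h : m ≤ m') : Partn.Sub (rowP m) (rowP m') := by
  intro i
  simp only [rowP_part]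
  split <;> omega

lemma eq_rowP {μ : Partn} {m : ℕ} (h : ∀ i, 1 ≤ i → μ.part i = 0) (hs : μ.size = m) :
    μ = rowP m := by
  have hsupp : μ.toFun.support ⊆ {0} := by
    intro i hi
    rw [Finsupp.mem_support_iff] at hi
    rcases Nat.eq_zero_or_pos i with rfl | hipos
    · exact Finset.mem_singleton_self 0
    · exact absurd (h i hipos) hi
  have hsize : μ.size = μ.part 0 := by
    rw [μ.size_eq_sum hsupp, Finset.sum_singleton]
  refine Partn.ext' fun i => ?_
  rcases Nat.eq_zero_or_pos i with rfl | hipos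
  · rw [rowP_part_zero, ← hs, hsize]
  · rw [h i hipos, rowP_part, if_neg (by omega)]

def hookP (n : ℕ) : Partn :=
  ⟨Finsupp.onFinset {0, 1} (fun i => if i = 0 then max n 1 else if i = 1 then 1 else 0)
      (by
        intro i hi
        simp only [Finset.mem_insert, Finset.mem_singleton]
        by_contra hc
        push_neg at hc
        simp [hc.1, hc.2] at hi),
   by
     intro i j hij
     simp only [Finsupp.onFinset_apply]
     split_ifs <;> simp_all <;> omega⟩

lemma hookP_part_zero (n : ℕ) (hn : 1 ≤ n) : (hookP n).part 0 = n := by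
  simp [hookP, Partn.part]; omega

lemma hookP_part_one (n : ℕ) : (hookP n).part 1 = 1 := by
  simp [hookP, Partn.part]

lemma hookP_part_ge (n i : ℕ) (hi : 2 ≤ i) : (hookP n).part i = 0 := by
  simp only [hookP, Partn.part, Finsupp.onFinset_apply]
  split_ifs <;> omega

/-! ### Positivity of `bbox` -/

lemma key_pos {q t : ℝ} (hq : |q| < 1) (ht : |t| < 1) {a b : ℕ} (h : 1 ≤ a + b) :
    0 < 1 - q ^ a * t ^ b := by
  have habs : |q ^ a * t ^ b| < 1 := by
    rw [abs_mul, abs_pow, abs_pow]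
    rcases Nat.eq_zero_or_pos a with rfl | ha
    · have h1 : |t| ^ b < 1 := pow_lt_one₀ (abs_nonneg t) ht (by omega)
      simpa using h1
    · have h1 : |q| ^ a < 1 := pow_lt_one₀ (abs_nonneg q) hq (by omega)
      have h2 : |t| ^ b ≤ 1 := pow_le_one₀ (abs_nonneg t) ht.le
      nlinarith [pow_nonneg (abs_nonneg q) a, pow_nonneg (abs_nonneg t) b]
  have hle := le_abs_self (q ^ a * t ^ b)
  linarith

lemma bbox_pos {q t : ℝ} (hq : |q| < 1) (ht : |t| < 1) (μ : Partn) (s : ℕ × ℕ) :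
    0 < bbox q t μ s := by
  rw [bbox]
  split
  · next hin =>
    have hconj : s.1 < μ.conj s.2 := Partn.conj_gt hin
    refine div_pos (key_pos hq ht ?_) (key_pos hq ht ?_) <;> omega
  · exact one_pos

/-! ### psi coefficients -/

lemma psiCoeff_pos {q t : ℝ} (hq : |q| < 1) (ht : |t| < 1) (ν μ : Partn) :
    0 < psiCoeff q t ν μ :=
  finprod_mem_pos fun s => div_pos (bbox_pos hq ht μ s) (bbox_pos hq ht ν s)

lemma psiCoeff_self (q t : ℝ) (ν : Partn) : psiCoeff q t ν ν = 1 := by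
  have h : RSet ν ν \ CSet ν ν = (∅ : Set (ℕ × ℕ)) := by
    ext s
    simp [RSet, CSet]
  rw [psiCoeff, h, finprod_mem_empty]

lemma psiCoeff_empty (q t : ℝ) (ν : Partn) : psiCoeff q t ν Partn.empty = 1 := by
  have h : RSet ν Partn.empty \ CSet ν Partn.empty = (∅ : Set (ℕ × ℕ)) := by
    ext s
    simp only [Set.mem_diff, Set.mem_empty_iff_false, iff_false, RSet, CSet,
      Set.mem_setOf_eq, Partn.empty_part, Partn.empty_conj]
    intro hs
    exact hs.2 ⟨hs.1.1, lt_of_le_of_lt (Nat.zero_le s.1) (Partn.conj_gt hs.1.1)⟩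
  rw [psiCoeff, h, finprod_mem_empty]

lemma psiWt_pos {q t : ℝ} (hq : |q| < 1) (ht : |t| < 1) {sh : Partn} (T : Tableau sh) :
    0 < T.psiWt q t :=
  finprod_pos' fun i => psiCoeff_pos hq ht _ _

lemma cCoeff_nonneg {q t : ℝ} (hq : |q| < 1) (ht : |t| < 1) (ν μ : Partn) :
    0 ≤ cCoeff q t ν μ :=
  finsum_mem_nonneg fun T => (psiWt_pos hq ht T).le

/-! ### Horizontal strips involving rows -/

lemma hstrip_empty_row (m : ℕ) : HStrip Partn.empty (rowP m) := by
  constructor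
  · exact Partn.empty_sub _
  · intro j
    rw [rowP_conj, Partn.empty_conj]
    split <;> omega

lemma hstrip_row_row {m m' : ℕ} (h : m ≤ m') : HStrip (rowP m) (rowP m') := by
  constructor
  · exact rowP_sub h
  · intro j
    rw [rowP_conj, rowP_conj]
    split_ifs <;> omega

lemma hstrip_refl (ν : Partn) : HStrip ν ν :=
  ⟨fun _ => le_rfl, fun j => Nat.le_succ _⟩

/-! ### Tableau basics -/

lemma Tableau.ext' {sh : Partn} {T S : Tableau sh} (h : T.seq = S.seq) : T = S := by
  cases T; cases S; cases h; rfl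

lemma Tableau.size_mono {sh : Partn} (T : Tableau sh) {i j : ℕ} (h : i ≤ j) :
    (T.seq i).size ≤ (T.seq j).size := by
  induction j with
  | zero => simp [Nat.le_zero.mp h]
  | succ k ih =>
    rcases Nat.lt_or_ge i (k + 1) with hik | hik
    · exact le_trans (ih (by omega)) (Partn.size_mono (T.strip k).1)
    · have : i = k + 1 := by omega
      subst this; rfl

/-- Classification of tableaux with row content. -/
lemma tableau_row_content {ν : Partn} {m : ℕ} (hm : 1 ≤ m) (T : Tableau ν)
    (hc : ∀ i, T.content i = (rowP m).part i) :
    ν = rowP m ∧ ∀ i, 1 ≤ i → T.seq i = ν := by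
  have hsz0 : (T.seq 0).size = 0 := by rw [T.seq_zero, Partn.empty_size]
  have hsz1 : (T.seq 1).size = m := by
    have h0 := hc 0
    rw [Tableau.content, rowP_part_zero] at h0
    rw [show (0:ℕ) + 1 = 1 from rfl] at h0
    have hmono := T.size_mono (Nat.zero_le 1)
    omega
  have hstab : ∀ i, 1 ≤ i → T.seq i = T.seq 1 := by
    intro i hi
    induction i with
    | zero => omega
    | succ k ih =>
      rcases Nat.eq_zero_or_pos k with rfl | hk
      · rfl
      · have hck := hc k
        rw [Tableau.content, rowP_part, if_neg (by omega)] at hck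
        have hmono := T.size_mono (show k ≤ k + 1 by omega)
        have : (T.seq (k + 1)).size = (T.seq k).size := by omega
        rw [← ih hk]
        exact (Partn.eq_of_sub_size (T.strip k).1 (by omega)).symm
  have hshape : ν = T.seq 1 := by
    refine (Partn.eq_of_sub_size ?_ ?_).symm
    · exact T.le_shape 1
    · have hsub : Partn.Sub ν (T.seq 1) := by
        intro i
        by_contra hcon
        push_neg at hcon
        obtain ⟨n, hn⟩ := T.exhaustive i ((T.seq 1).part i) hcon
        rcases Nat.eq_zero_or_pos n with rfl | hnpos
        · rw [T.seq_zero] at hn; exact absurd hn (by simp [Partn.empty_part])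
        · rw [hstab n hnpos] at hn; omega
      exact le_antisymm (Partn.size_mono (T.le_shape 1)) (Partn.size_mono hsub)
  have hrow : ∀ i, 1 ≤ i → ν.part i = 0 := by
    intro i hi
    have hconj : ν.conj 0 ≤ 1 := by
      have := (T.strip 0).2 0
      rw [T.seq_zero, Partn.empty_conj, ← hshape] at this
      omega
    by_contra hcon
    have hp1 : 1 ≤ ν.part i := by omega
    have : i < ν.conj 0 := Partn.conj_gt (by omega : 0 < ν.part i)
    omega
  have hνsize : ν.size = m := by rw [hshape, hsz1]
  have hνrow : ν = rowP m := eq_rowP hrow hνsize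
  exact ⟨hνrow, fun i hi => by rw [hstab i hi, ← hshape]⟩

/-! ### The canonical row tableau -/

def Trow (m : ℕ) : Tableau (rowP m) where
  seq i := if i = 0 then Partn.empty else rowP m
  seq_zero := rfl
  strip i := by
    rcases Nat.eq_zero_or_pos i with rfl | hi
    · simpa using hstrip_empty_row m
    · rw [if_neg (by omega), if_neg (by omega)]
      exact hstrip_refl _
  le_shape i := by
    split
    · exact Partn.empty_sub _
    · exact fun _ => le_rfl
  exhaustive i j h := ⟨1, by simpa using h⟩

lemma Trow_seq (m i : ℕ) : (Trow m).seq i = if i = 0 then Partn.empty else rowP m := rfl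

lemma Trow_content (m : ℕ) : ∀ i, (Trow m).content i = (rowP m).part i := by
  intro i
  rcases Nat.eq_zero_or_pos i with rfl | hi
  · rw [Tableau.content, Trow_seq, Trow_seq, if_pos rfl, if_neg (by omega), rowP_size,
      Partn.empty_size, rowP_part_zero]
    omega
  · rw [Tableau.content, rowP_part, if_neg (by omega), Trow_seq, Trow_seq,
      if_neg (by omega : ¬ i + 1 = 0), if_neg (by omega : ¬ i = 0)]
    omega

lemma Trow_psiWt (q t : ℝ) (m : ℕ) : (Trow m).psiWt q t = 1 := by
  rw [Tableau.psiWt]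
  refine finprod_eq_one_of_forall_eq_one fun i => ?_
  rcases Nat.eq_zero_or_pos i with rfl | hi
  · rw [Trow_seq, Trow_seq, if_pos rfl, if_neg (by omega : ¬ (0:ℕ) + 1 = 0)]
    exact psiCoeff_empty q t _
  · rw [Trow_seq, Trow_seq, if_neg (by omega : ¬ i + 1 = 0), if_neg (by omega : ¬ i = 0)]
    exact psiCoeff_self q t _

lemma cCoeff_row_self (q t : ℝ) {m : ℕ} (hm : 1 ≤ m) :
    cCoeff q t (rowP m) (rowP m) = 1 := by
  have hset : {T : Tableau (rowP m) | ∀ i, T.content i = (rowP m).part i} = {Trow m} := by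
    ext T
    simp only [Set.mem_setOf_eq, Set.mem_singleton_iff]
    constructor
    · intro hT
      obtain ⟨_, hstab⟩ := tableau_row_content hm T hT
      refine Tableau.ext' (funext fun i => ?_)
      rcases Nat.eq_zero_or_pos i with rfl | hi
      · rw [T.seq_zero, Trow_seq, if_pos rfl]
      · rw [hstab i hi, Trow_seq, if_neg (by omega)]
    · rintro rfl
      exact Trow_content m
  rw [cCoeff, hset, finsum_mem_singleton, Trow_psiWt]

lemma cCoeff_row_ne (q t : ℝ) {ν : Partn} {m : ℕ} (hm : 1 ≤ m) (hne : ν ≠ rowP m) :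
    cCoeff q t ν (rowP m) = 0 := by
  have hset : {T : Tableau ν | ∀ i, T.content i = (rowP m).part i} = (∅ : Set (Tableau ν)) := by
    ext T
    simp only [Set.mem_setOf_eq, Set.mem_empty_iff_false, iff_false]
    intro hT
    exact hne (tableau_row_content hm T hT).1
  rw [cCoeff, hset, finsum_mem_empty]

/-! ### The value `ψ_{(n+1)/(n)}` -/

lemma RC_row (n : ℕ) :
    RSet (rowP (n + 1)) (rowP n) \ CSet (rowP (n + 1)) (rowP n) =
      ↑((Finset.range n).image fun j => ((0 : ℕ), j)) := by
  ext s
  simp only [Set.mem_diff, RSet, CSet, Set.mem_setOf_eq, Finset.coe_image, Set.mem_image,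
    Finset.coe_range, Set.mem_Iio, rowP_part, rowP_conj]
  constructor
  · rintro ⟨⟨h1, h2⟩, h3⟩
    have hs1 : s.1 = 0 := by by_contra hc; simp [hc] at h2
    rw [if_pos hs1] at h1
    refine ⟨s.2, ?_, ?_⟩
    · by_contra hc
      push_neg at hc
      have hs2 : s.2 = n := by omega
      exact h3 ⟨by rw [if_pos hs1]; omega, by rw [hs2]; simp⟩
    · rw [← hs1]
  · rintro ⟨j, hj, rfl⟩
    refine ⟨⟨by simp <;> omega, by simp <;> omega⟩, ?_⟩
    rintro ⟨-, h2⟩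
    simp only [if_pos (show j < n from hj), if_pos (show j < n + 1 by omega)] at h2
    omega

lemma bbox_row {q t : ℝ} (m j : ℕ) (hj : j < m) :
    bbox q t (rowP m) (0, j) = (1 - q ^ (m - j - 1) * t) / (1 - q ^ (m - j)) := by
  have hpart : (rowP m).part (0, j).1 = m := rowP_part_zero m
  have hconj : (rowP m).conj (0, j).2 = 1 := by rw [rowP_conj]; exact if_pos hj
  rw [bbox, if_pos (by rw [hpart]; exact hj), hpart, hconj]
  norm_num

lemma prodB {q t : ℝ} (hq : |q| < 1) (ht : |t| < 1) (n : ℕ) :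
    ∏ j ∈ Finset.range n,
        ((1 - q ^ j * t) * (1 - q ^ (j + 2)) / ((1 - q ^ (j + 1)) * (1 - q ^ (j + 1) * t))) =
      (1 - t) * (1 - q ^ (n + 1)) / ((1 - q) * (1 - q ^ n * t)) := by
  have hqk : ∀ k : ℕ, 1 ≤ k → (1 : ℝ) - q ^ k ≠ 0 := by
    intro k hk
    have := key_pos hq ht (a := k) (b := 0) (by omega)
    rw [pow_zero, mul_one] at this
    linarith
  have hqt : ∀ k : ℕ, (1 : ℝ) - q ^ k * t ≠ 0 := by
    intro k
    have := key_pos hq ht (a := k) (b := 1) (by omega)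
    rw [pow_one] at this
    linarith
  have hq1 : (1 : ℝ) - q ≠ 0 := by have := hqk 1 le_rfl; rwa [pow_one] at this
  induction n with
  | zero =>
    have ht1 : (1 : ℝ) - t ≠ 0 := by have := hqt 0; rwa [pow_zero, one_mul] at this
    rw [Finset.range_zero, Finset.prod_empty, eq_comm,
      div_eq_one_iff_eq (mul_ne_zero hq1 (by rw [pow_zero, one_mul]; exact ht1))]
    ring
  | succ n ih =>
    rw [Finset.prod_range_succ, ih]
    have h1 := hqk (n + 1) (by omega)
    have h2 := hqt n
    have h3 := hqt (n + 1)
    rw [div_mul_div_comm, div_eq_div_iff (mul_ne_zero (mul_ne_zero hq1 h2) (mul_ne_zero h1 h3))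
      (mul_ne_zero hq1 h3)]
    ring

lemma psi_row_succ {q t : ℝ} (hq : |q| < 1) (ht : |t| < 1) (n : ℕ) :
    psiCoeff q t (rowP (n + 1)) (rowP n) =
      (1 - t) * (1 - q ^ (n + 1)) / ((1 - q) * (1 - q ^ n * t)) := by
  rw [psiCoeff, RC_row, finprod_mem_coe_finset,
    Finset.prod_image (fun a _ b _ h => by simpa using h)]
  have hstep : ∀ j ∈ Finset.range n,
      bbox q t (rowP n) (0, j) / bbox q t (rowP (n + 1)) (0, j) =
        (fun j => (1 - q ^ (n - j - 1) * t) * (1 - q ^ (n + 1 - j)) /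
          ((1 - q ^ (n - j)) * (1 - q ^ (n - j) * t))) j := by
    intro j hj
    rw [Finset.mem_range] at hj
    rw [bbox_row n j hj, bbox_row (n + 1) j (by omega)]
    beta_reduce
    rw [show n + 1 - j - 1 = n - j by omega]
    have h1 : (1 : ℝ) - q ^ (n - j) ≠ 0 := by
      have := key_pos hq ht (a := n - j) (b := 0) (by omega)
      rw [pow_zero, mul_one] at this; linarith
    have h2 : (1 : ℝ) - q ^ (n + 1 - j) ≠ 0 := by
      have := key_pos hq ht (a := n + 1 - j) (b := 0) (by omega)
      rw [pow_zero, mul_one] at this; linarith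
    have h3 : (1 : ℝ) - q ^ (n - j) * t ≠ 0 := by
      have := key_pos hq ht (a := n - j) (b := 1) (by omega)
      rw [pow_one] at this; linarith
    field_simp
    try ring
  rw [Finset.prod_congr rfl hstep]
  rw [← Finset.prod_range_reflect]
  have hstep2 : ∀ j ∈ Finset.range n,
      (1 - q ^ (n - (n - 1 - j) - 1) * t) * (1 - q ^ (n + 1 - (n - 1 - j))) /
          ((1 - q ^ (n - (n - 1 - j))) * (1 - q ^ (n - (n - 1 - j)) * t)) =
        (1 - q ^ j * t) * (1 - q ^ (j + 2)) / ((1 - q ^ (j + 1)) * (1 - q ^ (j + 1) * t)) := by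
    intro j hj
    rw [Finset.mem_range] at hj
    rw [show n - (n - 1 - j) - 1 = j by omega, show n + 1 - (n - 1 - j) = j + 2 by omega,
      show n - (n - 1 - j) = j + 1 by omega]
  rw [Finset.prod_congr rfl hstep2, prodB hq ht n]

/-! ### The canonical hook-content tableau -/

def Thook (n : ℕ) : Tableau (rowP (n + 1)) where
  seq i := if i = 0 then Partn.empty else if i = 1 then rowP n else rowP (n + 1)
  seq_zero := rfl
  strip i := by
    match i with
    | 0 => simpa using hstrip_empty_row n
    | 1 => simpa using hstrip_row_row (Nat.le_succ n)
    | (k + 2) =>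
      rw [if_neg (by omega), if_neg (by omega), if_neg (by omega), if_neg (by omega)]
      exact hstrip_refl _
  le_shape i := by
    split
    · exact Partn.empty_sub _
    · split
      · exact rowP_sub (Nat.le_succ n)
      · exact fun _ => le_rfl
  exhaustive i j h := ⟨2, by simpa using h⟩

lemma Thook_seq (n i : ℕ) :
    (Thook n).seq i = if i = 0 then Partn.empty else if i = 1 then rowP n else rowP (n + 1) :=
  rfl

lemma Thook_content {n : ℕ} (hn : 1 ≤ n) : ∀ i, (Thook n).content i = (hookP n).part i := by
  intro i
  match i with
  | 0 =>
    rw [Tableau.content, hookP_part_zero n hn, Thook_seq, Thook_seq]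
    norm_num [rowP_size, Partn.empty_size]
  | 1 =>
    rw [Tableau.content, hookP_part_one, Thook_seq, Thook_seq]
    norm_num [rowP_size]
  | (k + 2) =>
    rw [Tableau.content, hookP_part_ge n (k + 2) (by omega), Thook_seq, Thook_seq,
      if_neg (by omega), if_neg (by omega), if_neg (by omega), if_neg (by omega)]
    omega

lemma Thook_psiWt (q t : ℝ) (n : ℕ) :
    (Thook n).psiWt q t = psiCoeff q t (rowP (n + 1)) (rowP n) := by
  rw [Tableau.psiWt]
  rw [finprod_eq_single _ 1]
  · rw [Thook_seq, Thook_seq]; norm_num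
  · intro i hi
    match i with
    | 0 =>
      rw [Thook_seq, Thook_seq, if_pos rfl, if_neg (by omega), if_pos rfl]
      exact psiCoeff_empty q t _
    | (k + 2) =>
      rw [Thook_seq, Thook_seq, if_neg (by omega), if_neg (by omega), if_neg (by omega),
        if_neg (by omega)]
      exact psiCoeff_self q t _

/-- classification of tableaux of shape `rowP (n+1)` with hook content -/
lemma tableau_hook_content {n : ℕ} (hn : 1 ≤ n) (T : Tableau (rowP (n + 1)))
    (hc : ∀ i, T.content i = (hookP n).part i) : T = Thook n := by
  have hsz0 : (T.seq 0).size = 0 := by rw [T.seq_zero, Partn.empty_size]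
  have hsz1 : (T.seq 1).size = n := by
    have h0 := hc 0
    rw [Tableau.content, hookP_part_zero n hn] at h0
    rw [show (0 : ℕ) + 1 = 1 from rfl] at h0
    have hmono := T.size_mono (Nat.zero_le 1)
    omega
  have hsz2 : (T.seq 2).size = n + 1 := by
    have h1 := hc 1
    rw [Tableau.content, hookP_part_one] at h1
    rw [show (1 : ℕ) + 1 = 2 from rfl] at h1
    have hmono := T.size_mono (show 1 ≤ 2 by omega)
    omega
  have hstab : ∀ i, 2 ≤ i → T.seq i = T.seq 2 := by
    intro i hi
    induction i with
    | zero => omega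
    | succ k ih =>
      rcases Nat.lt_or_ge k 2 with hk | hk
      · have : k = 1 := by omega
        subst this; rfl
      · have hck := hc k
        rw [Tableau.content, hookP_part_ge n k (by omega)] at hck
        have hmono := T.size_mono (show k ≤ k + 1 by omega)
        rw [← ih (by omega)]
        exact (Partn.eq_of_sub_size (T.strip k).1 (by omega)).symm
  have hseq2 : T.seq 2 = rowP (n + 1) :=
    Partn.eq_of_sub_size (T.le_shape 2) (by rw [hsz2, rowP_size])
  have hseq1 : T.seq 1 = rowP n := by
    refine eq_rowP (fun i hi => ?_) hsz1
    have h1 := (T.le_shape 1) i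
    rw [rowP_part, if_neg (by omega)] at h1
    omega
  refine Tableau.ext' (funext fun i => ?_)
  rw [Thook_seq]
  match i with
  | 0 => rw [if_pos rfl, T.seq_zero]
  | 1 => rw [if_neg (by omega), if_pos rfl]; exact hseq1
  | (k + 2) =>
    rw [if_neg (by omega), if_neg (by omega)]
    rw [hstab (k + 2) (by omega)]
    exact hseq2

lemma cCoeff_hook (q t : ℝ) {n : ℕ} (hn : 1 ≤ n) :
    cCoeff q t (rowP (n + 1)) (hookP n) = psiCoeff q t (rowP (n + 1)) (rowP n) := by
  have hset : {T : Tableau (rowP (n + 1)) | ∀ i, T.content i = (hookP n).part i} = {Thook n} := by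
    ext T
    simp only [Set.mem_setOf_eq, Set.mem_singleton_iff]
    exact ⟨fun hT => tableau_hook_content hn T hT, fun h => h ▸ Thook_content hn⟩
  rw [cCoeff, hset, finsum_mem_singleton, Thook_psiWt]

/-! ### `gMono` values -/

lemma gg_zero : gg 0 = 1 := rfl

lemma gg_eq_X {m : ℕ} (hm : 1 ≤ m) : gg m = MvPolynomial.X (m - 1) := by
  rw [gg, if_neg (by omega)]

lemma gg_ne_zero {m : ℕ} (hm : 1 ≤ m) : gg m ≠ 0 := by
  rw [gg_eq_X hm]
  exact MvPolynomial.X_ne_zero _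

lemma gMono_row (m : ℕ) : gMono (rowP m) = gg m := by
  rw [gMono, finprod_eq_single _ 0]
  · rw [rowP_part_zero]
  · intro i hi
    rw [rowP_part, if_neg hi, gg_zero]

lemma gMono_hook {n : ℕ} (hn : 1 ≤ n) : gMono (hookP n) = gg n * gg 1 := by
  rw [gMono, finprod_eq_prod_of_mulSupport_subset _ (s := ({0, 1} : Finset ℕ))]
  · rw [Finset.prod_insert (by norm_num), Finset.prod_singleton, hookP_part_zero n hn,
      hookP_part_one]
  · intro i hi
    simp only [Function.mem_mulSupport] at hi
    simp only [Finset.coe_insert, Finset.coe_singleton, Set.mem_insert_iff, Set.mem_singleton_iff]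
    by_contra hc
    push_neg at hc
    exact hi (by rw [hookP_part_ge n i (by omega), gg_zero])

/-! ### Applying the specialization -/

lemma theta_gMono {q t : ℝ} {Q : Partn → Lam} (hQ : QRel q t Q) (θ : Lam →ₐ[ℝ] ℝ) (μ : Partn)
    (hne : gMono μ ≠ 0) :
    (Function.support fun ν => cCoeff q t ν μ * θ (Q ν)).Finite ∧
      θ (gMono μ) = ∑ᶠ ν, cCoeff q t ν μ * θ (Q ν) := by
  have hfin : (Function.support fun ν => cCoeff q t ν μ • Q ν).Finite := by
    by_contra hf
    have h0 := hQ μ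
    rw [finsum_of_infinite_support hf] at h0
    exact hne h0
  have hθ : ∀ ν, θ (cCoeff q t ν μ • Q ν) = cCoeff q t ν μ * θ (Q ν) := by
    intro ν
    rw [map_smul, smul_eq_mul]
  have hsub : (Function.support fun ν => cCoeff q t ν μ * θ (Q ν)) ⊆
      Function.support fun ν => cCoeff q t ν μ • Q ν := by
    intro ν hν
    simp only [Function.mem_support] at hν ⊢
    intro h0
    exact hν (by rw [← hθ, h0, map_zero])
  refine ⟨hfin.subset hsub, ?_⟩
  rw [hQ μ]
  have hmap := (θ.toLinearMap.toAddMonoidHom).map_finsum hfin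
  simp only [LinearMap.toAddMonoidHom_coe, AlgHom.toLinearMap_apply] at hmap
  rw [hmap]
  exact finsum_congr fun ν => hθ ν
end Aux
/-- A Macdonald-positive specialization satisfies
`0 ≤ θ(g_{n+1}) ≤ ((1-q)(1-tqⁿ))/((1-t)(1-q^{n+1}))·θ(g₁)·θ(g_n)`,
hence `θ(g_n)` grows at most geometrically. -/
theorem generating_function_positive_radius (q t : ℝ) (hq : |q| < 1) (ht : |t| < 1)
    (Q : Partn → Lam) (hQ : QRel q t Q)
    (θ : Lam →ₐ[ℝ] ℝ) (hpos : ∀ ν : Partn, 0 ≤ θ (Q ν)) :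
    (∀ n : ℕ, 1 ≤ n → 0 ≤ θ (gg (n + 1)) ∧
        θ (gg (n + 1)) ≤
          (1 - q) * (1 - t * q ^ n) / ((1 - t) * (1 - q ^ (n + 1)))
            * θ (gg 1) * θ (gg n)) ∧
    ∃ K : ℝ, 0 < K ∧ ∀ n : ℕ, 1 ≤ n → θ (gg n) ≤ K ^ n := by
  -- basic nonvanishing facts
  have hq1 : (0 : ℝ) < 1 - q := by cases abs_lt.mp hq; linarith
  have ht1 : (0 : ℝ) < 1 - t := by cases abs_lt.mp ht; linarith
  have hqpow : ∀ k : ℕ, 1 ≤ k → (0 : ℝ) < 1 - q ^ k := by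
    intro k hk
    have := key_pos hq ht (a := k) (b := 0) (by omega)
    rwa [pow_zero, mul_one] at this
  have hqtpow : ∀ k : ℕ, (0 : ℝ) < 1 - q ^ k * t := by
    intro k
    have := key_pos hq ht (a := k) (b := 1) (by omega)
    rwa [pow_one] at this
  -- `θ (g m) = θ (Q (rowP m))`
  have hθrow : ∀ m : ℕ, 1 ≤ m → θ (gg m) = θ (Q (rowP m)) := by
    intro m hm
    obtain ⟨hfin, heq⟩ := theta_gMono hQ θ (rowP m)
      (by rw [gMono_row]; exact gg_ne_zero hm)
    rw [← gMono_row m, heq, finsum_eq_single _ (rowP m)]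
    · rw [cCoeff_row_self q t hm, one_mul]
    · intro ν hν
      rw [cCoeff_row_ne q t hm hν, zero_mul]
  have hggnn : ∀ m : ℕ, 1 ≤ m → 0 ≤ θ (gg m) := by
    intro m hm
    rw [hθrow m hm]
    exact hpos _
  -- the main inequality
  have main : ∀ n : ℕ, 1 ≤ n → 0 ≤ θ (gg (n + 1)) ∧
      θ (gg (n + 1)) ≤
        (1 - q) * (1 - t * q ^ n) / ((1 - t) * (1 - q ^ (n + 1))) * θ (gg 1) * θ (gg n) := by
    intro n hn
    refine ⟨hggnn (n + 1) (by omega), ?_⟩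
    obtain ⟨hfin, heq⟩ := theta_gMono hQ θ (hookP n)
      (by rw [gMono_hook hn]; exact mul_ne_zero (gg_ne_zero hn) (gg_ne_zero le_rfl))
    have hsum : θ (gg n) * θ (gg 1) = ∑ᶠ ν, cCoeff q t ν (hookP n) * θ (Q ν) := by
      rw [← map_mul, ← gMono_hook hn, heq]
    have hsingle : cCoeff q t (rowP (n + 1)) (hookP n) * θ (Q (rowP (n + 1))) ≤
        ∑ᶠ ν, cCoeff q t ν (hookP n) * θ (Q ν) :=
      single_le_finsum _ hfin fun ν => mul_nonneg (cCoeff_nonneg hq ht _ _) (hpos ν)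
    rw [cCoeff_hook q t hn, psi_row_succ hq ht n] at hsingle
    set V : ℝ := (1 - t) * (1 - q ^ (n + 1)) / ((1 - q) * (1 - q ^ n * t)) with hVdef
    have hVpos : 0 < V := div_pos (mul_pos ht1 (hqpow (n + 1) (by omega)))
      (mul_pos hq1 (hqtpow n))
    have hle : θ (Q (rowP (n + 1))) ≤ θ (gg n) * θ (gg 1) / V := by
      rw [le_div_iff₀ hVpos]
      calc θ (Q (rowP (n + 1))) * V = V * θ (Q (rowP (n + 1))) := by ring
        _ ≤ θ (gg n) * θ (gg 1) := le_of_le_of_eq hsingle hsum.symm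
    rw [hθrow (n + 1) (by omega)]
    refine le_trans hle (le_of_eq ?_)
    rw [hVdef]
    have h1 : (1 : ℝ) - t ≠ 0 := ne_of_gt ht1
    have h2 : (1 : ℝ) - q ^ (n + 1) ≠ 0 := ne_of_gt (hqpow (n + 1) (by omega))
    have h3 : (1 : ℝ) - q ≠ 0 := ne_of_gt hq1
    have h4 : (1 : ℝ) - q ^ n * t ≠ 0 := ne_of_gt (hqtpow n)
    field_simp
  refine ⟨main, ?_⟩
  -- geometric bound
  have hqabs : (0 : ℝ) < 1 - |q| := by linarith [abs_nonneg q]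
  set C : ℝ := (1 - q) * (1 + |t|) / ((1 - t) * (1 - |q|)) with hCdef
  have hCpos : 0 < C := div_pos (mul_pos hq1 (by positivity)) (mul_pos ht1 hqabs)
  have hC1 : 1 ≤ C := by
    rw [hCdef, le_div_iff₀ (mul_pos ht1 hqabs)]
    have e1 : 1 - |q| ≤ 1 - q := by cases abs_lt.mp hq; nlinarith [le_abs_self q]
    have e2 : 1 - t ≤ 1 + |t| := by linarith [neg_abs_le t]
    nlinarith
  have hCn : ∀ n : ℕ, 1 ≤ n →
      (1 - q) * (1 - t * q ^ n) / ((1 - t) * (1 - q ^ (n + 1))) ≤ C := by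
    intro n hn
    rw [hCdef]
    refine div_le_div₀ (by positivity) ?_ (mul_pos ht1 hqabs) ?_
    · have e1 : -(|t|) ≤ t * q ^ n := by
        have h1 : |t * q ^ n| ≤ |t| := by
          rw [abs_mul, abs_pow]
          calc |t| * |q| ^ n ≤ |t| * 1 := by
                exact mul_le_mul_of_nonneg_left (pow_le_one₀ (abs_nonneg q) hq.le) (abs_nonneg t)
            _ = |t| := mul_one _
        have := neg_abs_le (t * q ^ n)
        linarith
      nlinarith [hq1]
    · have e2 : q ^ (n + 1) ≤ |q| := by
        calc q ^ (n + 1) ≤ |q ^ (n + 1)| := le_abs_self _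
          _ = |q| ^ (n + 1) := abs_pow q (n + 1)
          _ ≤ |q| := by
              calc |q| ^ (n + 1) = |q| ^ n * |q| := by ring
                _ ≤ 1 * |q| := by
                    exact mul_le_mul_of_nonneg_right (pow_le_one₀ (abs_nonneg q) hq.le)
                      (abs_nonneg q)
                _ = |q| := one_mul _
      nlinarith [ht1]
  set c1 : ℝ := θ (gg 1) with hc1def
  have hc1nn : 0 ≤ c1 := hggnn 1 le_rfl
  refine ⟨max 1 (C * c1), lt_of_lt_of_le one_pos (le_max_left _ _), ?_⟩
  set K : ℝ := max 1 (C * c1) with hKdef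
  have hK1 : 1 ≤ K := le_max_left _ _
  have hKCc1 : C * c1 ≤ K := le_max_right _ _
  have hKnn : 0 ≤ K := by linarith
  intro n hn
  induction n with
  | zero => omega
  | succ m ih =>
    rcases Nat.eq_zero_or_pos m with rfl | hm
    · -- n = 1
      rw [pow_one]
      calc c1 ≤ C * c1 := le_mul_of_one_le_left hc1nn hC1
        _ ≤ K := hKCc1
    · have hih := ih hm
      have hmain := (main m hm).2
      have hggm : 0 ≤ θ (gg m) := hggnn m hm
      calc θ (gg (m + 1)) ≤
          (1 - q) * (1 - t * q ^ m) / ((1 - t) * (1 - q ^ (m + 1))) * c1 * θ (gg m) := hmain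
        _ ≤ C * c1 * θ (gg m) :=
            mul_le_mul_of_nonneg_right (mul_le_mul_of_nonneg_right (hCn m hm) hc1nn) hggm
        _ ≤ C * c1 * K ^ m := by
            have hCc1 : 0 ≤ C * c1 := mul_nonneg hCpos.le hc1nn
            exact mul_le_mul_of_nonneg_left hih hCc1
        _ ≤ K * K ^ m := mul_le_mul_of_nonneg_right hKCc1 (pow_nonneg hKnn m)
        _ = K ^ (m + 1) := by ring
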